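/- For every prime p (including p = 2), D(p) ≡ 1 (mod p), where D(p) is the number of partitions of {1,...,p} with no singleton blocks. -/

import Mathlib

noncomputable def partDtot (n : ℕ) : ℕ :=
  Nat.card {P : Finpartition (Finset.univ : Finset (Fin n)) //
    ∀ b ∈ P.parts, 2 ≤ b.card}

/-!
Let a `p`-group `G` act transitively on a set `α` with `p` elements (say `ℤ/p` acting on
itself by translation). It permutes the partitions of `α` without singleton blocks, so their
number is congruent mod `p` to the number of `G`-invariant ones. The blocks of such a partition
number at most `p / 2`, and the orbit of a block of an invariant partition consists of blocks;
an orbit of size `< p` under a `p`-group is a single point, so every block is invariant, hence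
all of `α`. Thus the one-block partition is the only invariant one.
-/

open Finset MulAction
open scoped Pointwise

theorem IsPGroup.smul_eq_of_card_orbit_lt {p : ℕ} [Fact p.Prime] {G α : Type*} [Group G]
    [MulAction G α] (hG : IsPGroup p G) {a : α} [Finite (orbit G a)]
    (h : Nat.card (orbit G a) < p) (g : G) : g • a = a := by
  obtain ⟨n, hn⟩ := hG.card_orbit a
  have hn0 : n = 0 := by
    by_contra hn0
    exact (Nat.le_self_pow hn0 p).not_gt (hn ▸ h)
  rw [hn0, pow_zero, Nat.card_eq_one_iff_unique] at hn
  have : Subsingleton (orbit G a) := hn.1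
  exact congrArg Subtype.val
    (Subsingleton.elim (⟨g • a, mem_orbit a g⟩ : orbit G a) ⟨a, mem_orbit_self a⟩)

namespace Finset

variable {G α : Type*} [Group G] [MulAction G α] [DecidableEq α]

def smulFinsetOrderIso (g : G) : Finset α ≃o Finset α where
  toEquiv := MulAction.toPerm g
  map_rel_iff' := smul_finset_subset_smul_finset_iff

theorem eq_univ_of_smul_eq [IsPretransitive G α] [Fintype α] {s : Finset α} (hs : s.Nonempty)
    (h : ∀ g : G, g • s = s) : s = univ := by
  obtain ⟨x, hx⟩ := hs
  refine eq_univ_of_forall fun y => ?_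
  obtain ⟨g, rfl⟩ := exists_smul_eq G x y
  exact h g ▸ smul_mem_smul_finset hx

end Finset

namespace Finpartition

section Lattice

variable {β : Type*} [Lattice β] [OrderBot β] {a : β} [Decidable (a = ⊥)]

theorem mem_parts_top (ha : a ≠ ⊥) : a ∈ (⊤ : Finpartition a).parts := by
  obtain ⟨b, hb⟩ := (⊤ : Finpartition a).parts_nonempty ha
  rwa [mem_singleton.1 (parts_top_subset _ hb)] at hb

theorem eq_top_of_mem_parts {P : Finpartition a} (h : a ∈ P.parts) : P = ⊤ :=
  le_antisymm le_top fun _ hb => ⟨a, h, Finpartition.le _ hb⟩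

end Lattice

theorem two_mul_card_parts_le {α : Type*} [DecidableEq α] {s : Finset α} {P : Finpartition s}
    (hP : ∀ b ∈ P.parts, 2 ≤ #b) : 2 * #P.parts ≤ #s := by
  have := card_nsmul_le_sum P.parts card 2 hP
  rwa [smul_eq_mul, mul_comm, P.sum_card_parts] at this

variable {G α : Type*} [Group G] [MulAction G α] [Fintype α] [DecidableEq α]

instance : SMul G (Finpartition (univ : Finset α)) where
  smul g P := (P.map (smulFinsetOrderIso g)).copy smul_finset_univ

theorem parts_smul (g : G) (P : Finpartition (univ : Finset α)) :
    (g • P).parts = g • P.parts := by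
  change P.parts.map (smulFinsetOrderIso g).toEquiv.toEmbedding = _
  rw [map_eq_image]
  rfl

instance : MulAction G (Finpartition (univ : Finset α)) :=
  Function.Injective.mulAction parts (fun _ _ h => Finpartition.ext (by rw [h])) parts_smul

theorem smul_mem_parts {g : G} {P : Finpartition (univ : Finset α)} (hP : g • P = P)
    {b : Finset α} (hb : b ∈ P.parts) : g • b ∈ P.parts := by
  rw [← hP, parts_smul]
  exact smul_mem_smul_finset hb

theorem smul_top [Nonempty α] (g : G) : g • (⊤ : Finpartition (univ : Finset α)) = ⊤ :=
  eq_top_of_mem_parts <| by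
    have htop := mem_parts_top (a := (univ : Finset α)) univ_nonempty.ne_empty
    simpa [parts_smul] using smul_mem_smul_finset (a := g) htop

variable (G α) in
def noSingletons : SubMulAction G (Finpartition (univ : Finset α)) where
  carrier := {P | ∀ b ∈ P.parts, 2 ≤ #b}
  smul_mem' g P hP b hb := by
    rw [parts_smul, mem_smul_finset] at hb
    obtain ⟨c, hc, rfl⟩ := hb
    rw [card_smul_finset]
    exact hP c hc

variable {p : ℕ} [Fact p.Prime] [IsPretransitive G α]

theorem eq_top_of_smul_eq (hG : IsPGroup p G) (hα : Fintype.card α = p)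
    {P : Finpartition (univ : Finset α)} (hP : ∀ b ∈ P.parts, 2 ≤ #b)
    (hfix : ∀ g : G, g • P = P) : P = ⊤ := by
  have hp := (Fact.out : p.Prime).two_le
  obtain ⟨b, hb⟩ := P.parts_nonempty (card_pos.1 (by rw [card_univ]; omega)).ne_empty
  have horbit : orbit G b ⊆ P.parts := by
    rintro _ ⟨g, rfl⟩
    exact smul_mem_parts (hfix g) hb
  have hcard : Nat.card (orbit G b) < p := by
    have h1 : Nat.card (orbit G b) ≤ #P.parts := by
      simpa using Nat.card_mono (finite_toSet P.parts) horbit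
    have h2 := two_mul_card_parts_le hP
    rw [card_univ] at h2
    omega
  have := Finite.Set.subset _ horbit
  have hb_univ :=
    eq_univ_of_smul_eq (P.nonempty_of_mem_parts hb) (hG.smul_eq_of_card_orbit_lt hcard)
  exact eq_top_of_mem_parts (hb_univ ▸ hb)

theorem card_noSingletons_modEq_one (hG : IsPGroup p G) (hα : Fintype.card α = p) :
    Nat.card {P : Finpartition (univ : Finset α) // ∀ b ∈ P.parts, 2 ≤ #b}
      ≡ 1 [MOD p] := by
  have : Nonempty α := Fintype.card_pos_iff.1 (hα ▸ (Fact.out : p.Prime).pos)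
  have htop : ⊤ ∈ noSingletons G α := by
    intro b hb
    rw [mem_singleton.1 (parts_top_subset _ hb), card_univ, hα]
    exact (Fact.out : p.Prime).two_le
  have hfixed : fixedPoints G (noSingletons G α) = {⟨⊤, htop⟩} := by
    ext P
    simp only [mem_fixedPoints, Set.mem_singleton_iff, Subtype.ext_iff, SubMulAction.val_smul]
    exact ⟨eq_top_of_smul_eq hG hα P.2, fun h g => h ▸ smul_top g⟩
  calc Nat.card (noSingletons G α)
      ≡ Nat.card (fixedPoints G (noSingletons G α)) [MOD p] :=
        hG.card_modEq_card_fixedPoints _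
    _ = 1 := by rw [hfixed, Nat.card_unique]

end Finpartition

theorem partDtot_prime_mod (p : ℕ) (hp : p.Prime) : partDtot p ≡ 1 [MOD p] := by
  have : Fact p.Prime := ⟨hp⟩
  have : NeZero p := ⟨hp.ne_zero⟩
  exact Finpartition.card_noSingletons_modEq_one (G := Multiplicative (Fin p))
    (IsPGroup.of_card (n := 1) (by simp)) (Fintype.card_fin p)
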